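/- (Soundness of the base-extension semantics for IMLL) For every finite multiset Γ of IMLL formulas and every IMLL formula φ: if Γ ⊢ φ in the natural deduction system NIMLL, then Γ ⊩ φ, i.e. Γ ⊩_B^∅ φ for every base B. -/
import Mathlib


/-- Formulas of intuitionistic multiplicative linear logic over a
countably infinite set of atoms (here: `ℕ`). -/
inductive MForm : Type where
  | atom : ℕ → MForm
  | tensor : MForm → MForm → MForm
  | unit : MForm
  | limp : MForm → MForm → MForm
deriving DecidableEq

/-- An atomic rule `(P₁ ▷ p₁, …, Pₙ ▷ pₙ) ⇒ p`: a (possibly empty) finite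
set of atomic sequents together with a conclusion atom. -/
structure MRule : Type where
  prems : Finset (Multiset ℕ × ℕ)
  concl : ℕ

/-- A base is a set of atomic rules. -/
abbrev MBase := Set MRule

/-- Derivability in a base `B`: `P ⊢_B p`. -/
inductive MDer (B : MBase) : Multiset ℕ → ℕ → Prop where
  | ref (p : ℕ) : MDer B {p} p
  | app {r : MRule} (hr : r ∈ B) (S : Multiset ℕ × ℕ → Multiset ℕ)
      (h : ∀ pr ∈ r.prems, MDer B (S pr + pr.1) pr.2) :
      MDer B (r.prems.sum S) r.concl

/-- The resource-indexed support relation `⊩_B^P φ`. -/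
def MSupp : MForm → MBase → Multiset ℕ → Prop
  | .atom p, B, P => MDer B P p
  | .tensor φ ψ, B, P => ∀ X : MBase, B ⊆ X → ∀ U : Multiset ℕ, ∀ p : ℕ,
      (∀ Y : MBase, X ⊆ Y → ∀ V : Multiset ℕ,
        (∃ V₁ V₂ : Multiset ℕ, V = V₁ + V₂ ∧ MSupp φ Y V₁ ∧ MSupp ψ Y V₂) →
        MDer Y (U + V) p) →
      MDer X (P + U) p
  | .unit, B, P => ∀ X : MBase, B ⊆ X → ∀ U : Multiset ℕ, ∀ p : ℕ,
      MDer X U p → MDer X (P + U) p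
  | .limp φ ψ, B, P => ∀ X : MBase, B ⊆ X → ∀ U : Multiset ℕ,
      MSupp φ X U → MSupp ψ X (P + U)

/-- Support of a multiset of formulas: `⊩_B^P Γ`, obtained by splitting
the resources `P` among the members of `Γ`. -/
inductive MSuppCtx (B : MBase) : Multiset ℕ → Multiset MForm → Prop where
  | nil : MSuppCtx B 0 0
  | cons {P Q : Multiset ℕ} {φ : MForm} {Γ : Multiset MForm} :
      MSupp φ B P → MSuppCtx B Q Γ → MSuppCtx B (P + Q) (φ ::ₘ Γ)

/-- Support of a sequent: `Γ ⊩_B^P φ` (clause (Inf)). -/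
def MSuppInf (Γ : Multiset MForm) (B : MBase) (P : Multiset ℕ) (φ : MForm) : Prop :=
  ∀ X : MBase, B ⊆ X → ∀ U : Multiset ℕ, MSuppCtx X U Γ → MSupp φ X (P + U)

/-- Validity: `Γ ⊩ φ` iff `Γ ⊩_B^∅ φ` for every base `B`. -/
def MValid (Γ : Multiset MForm) (φ : MForm) : Prop :=
  ∀ B : MBase, MSuppInf Γ B 0 φ

/-- The natural deduction system NIMLL: `Γ ⊢ φ`. -/
inductive NIMLL : Multiset MForm → MForm → Prop where
  | ax (φ : MForm) : NIMLL {φ} φ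
  | limpI {Γ : Multiset MForm} {φ ψ : MForm} :
      NIMLL (φ ::ₘ Γ) ψ → NIMLL Γ (.limp φ ψ)
  | limpE {Γ Δ : Multiset MForm} {φ ψ : MForm} :
      NIMLL Γ (.limp φ ψ) → NIMLL Δ φ → NIMLL (Γ + Δ) ψ
  | unitI : NIMLL 0 .unit
  | unitE {Γ Δ : Multiset MForm} {φ : MForm} :
      NIMLL Γ φ → NIMLL Δ .unit → NIMLL (Γ + Δ) φ
  | tensorI {Γ Δ : Multiset MForm} {φ ψ : MForm} :
      NIMLL Γ φ → NIMLL Δ ψ → NIMLL (Γ + Δ) (.tensor φ ψ)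
  | tensorE {Γ Δ : Multiset MForm} {φ ψ χ : MForm} :
      NIMLL Γ (.tensor φ ψ) → NIMLL (φ ::ₘ ψ ::ₘ Δ) χ → NIMLL (Γ + Δ) χ

lemma MDer.mono {B X : MBase} (hBX : B ⊆ X) {P : Multiset ℕ} {p : ℕ}
    (h : MDer B P p) : MDer X P p := by
  induction h with
  | ref p => exact .ref p
  | app hr S h ih => exact .app (hBX hr) S ih

lemma MDer.cast {B : MBase} {P Q : Multiset ℕ} {p : ℕ}
    (h : MDer B P p) (e : P = Q) : MDer B Q p := e ▸ h

lemma MSupp.cast {φ : MForm} {B : MBase} {P Q : Multiset ℕ}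
    (h : MSupp φ B P) (e : P = Q) : MSupp φ B Q := e ▸ h

lemma MSupp.mono {φ : MForm} {B X : MBase} (hBX : B ⊆ X) {P : Multiset ℕ}
    (h : MSupp φ B P) : MSupp φ X P := by
  induction φ generalizing P with
  | atom p => exact MDer.mono hBX h
  | tensor φ ψ ih₁ ih₂ =>
    simp only [MSupp] at h ⊢
    exact fun Y hY => h Y (hBX.trans hY)
  | unit =>
    simp only [MSupp] at h ⊢
    exact fun Y hY => h Y (hBX.trans hY)
  | limp φ ψ ih₁ ih₂ =>
    simp only [MSupp] at h ⊢
    exact fun Y hY => h Y (hBX.trans hY)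

lemma MSuppCtx.mono {B X : MBase} (hBX : B ⊆ X) {P : Multiset ℕ}
    {Γ : Multiset MForm} (h : MSuppCtx B P Γ) : MSuppCtx X P Γ := by
  induction h with
  | nil => exact .nil
  | cons hφ hΓ ih => exact .cons (hφ.mono hBX) ih

lemma ctx_nil_inv' {B : MBase} {P : Multiset ℕ} {Γ : Multiset MForm}
    (h : MSuppCtx B P Γ) (hΓ : Γ = 0) : P = 0 := by
  induction h with
  | nil => rfl
  | cons _ _ _ => simp at hΓ

lemma ctx_nil_inv {B : MBase} {P : Multiset ℕ} (h : MSuppCtx B P 0) : P = 0 :=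
  ctx_nil_inv' h rfl

lemma ctx_cons_inv {B : MBase} {P : Multiset ℕ} {Γ' : Multiset MForm}
    (h : MSuppCtx B P Γ') : ∀ (φ : MForm) (Γ : Multiset MForm), Γ' = φ ::ₘ Γ →
    ∃ P₁ P₂, P = P₁ + P₂ ∧ MSupp φ B P₁ ∧ MSuppCtx B P₂ Γ := by
  induction h with
  | nil => intro φ Γ h; exact absurd h (by simp)
  | @cons P Q ψ Γ₀ hψ hΓ ih =>
    intro φ Γ hEq
    rcases Multiset.cons_eq_cons.mp hEq with ⟨rfl, rfl⟩ | ⟨hne, cs, h1, h2⟩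
    · exact ⟨P, Q, rfl, hψ, hΓ⟩
    · obtain ⟨Q₁, Q₂, rfl, hφ, hcs⟩ := ih φ cs h1
      exact ⟨Q₁, P + Q₂, by abel, hφ, h2 ▸ MSuppCtx.cons hψ hcs⟩

lemma ctx_split {B : MBase} : ∀ (Γ : Multiset MForm) {Δ : Multiset MForm}
    {P : Multiset ℕ}, MSuppCtx B P (Γ + Δ) →
    ∃ U V, P = U + V ∧ MSuppCtx B U Γ ∧ MSuppCtx B V Δ := by
  intro Γ
  induction Γ using Multiset.induction with
  | empty => intro Δ P h; exact ⟨0, P, (zero_add P).symm, .nil, by simpa using h⟩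
  | cons a Γ ih =>
    intro Δ P h
    rw [Multiset.cons_add] at h
    obtain ⟨P₁, P₂, rfl, ha, h'⟩ := ctx_cons_inv h a (Γ + Δ) rfl
    obtain ⟨U, V, rfl, hΓ, hΔ⟩ := ih h'
    exact ⟨P₁ + U, V, by abel, .cons ha hΓ, hΔ⟩

/-- General elimination lemma for `⊗`-like and `I`-like hypotheses,
proved by induction on the formula `χ`. -/
lemma gen_elim (C : MBase → Multiset ℕ → Prop) :
    ∀ (χ : MForm) (B : MBase) (P Q : Multiset ℕ),
      (∀ (X : MBase), B ⊆ X → ∀ (U : Multiset ℕ) (p : ℕ),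
        (∀ (Y : MBase), X ⊆ Y → ∀ V, C Y V → MDer Y (U + V) p) → MDer X (P + U) p) →
      (∀ (Y : MBase), B ⊆ Y → ∀ V, C Y V → MSupp χ Y (Q + V)) →
      MSupp χ B (P + Q) := by
  intro χ
  induction χ with
  | atom q =>
    intro B P Q hP hQ
    simp only [MSupp] at hQ ⊢
    exact hP B subset_rfl Q q (fun Y hY V hV => hQ Y hY V hV)
  | tensor χ₁ χ₂ ih₁ ih₂ =>
    intro B P Q hP hQ
    simp only [MSupp] at hQ ⊢
    intro X hX U p hk
    have := hP X hX (Q + U) p (fun Y hY V hV => by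
      have h2 := hQ Y (hX.trans hY) V hV
      have := h2 Y subset_rfl U p (fun Z hZ W hW => hk Z (hY.trans hZ) W hW)
      exact this.cast (by abel))
    exact this.cast (by abel)
  | unit =>
    intro B P Q hP hQ
    simp only [MSupp] at hQ ⊢
    intro X hX U p hU
    have := hP X hX (Q + U) p (fun Y hY V hV =>
      ((hQ Y (hX.trans hY) V hV) Y subset_rfl U p (MDer.mono hY hU)).cast
        (by abel))
    exact this.cast (by abel)
  | limp φ' ψ' ih₁ ih₂ =>
    intro B P Q hP hQ
    simp only [MSupp] at hQ ⊢
    intro X hX W hW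
    have res := ih₂ X P (Q + W)
      (fun X' hX' U p hk => hP X' (hX.trans hX') U p hk)
      (fun Y hY V hV => by
        have := hQ Y (hX.trans hY) V hV Y subset_rfl W (MSupp.mono hY hW)
        exact this.cast (by abel))
    exact res.cast (by abel)

lemma nimll_sound {Γ : Multiset MForm} {φ : MForm} (h : NIMLL Γ φ) :
    ∀ (X : MBase) (U : Multiset ℕ), MSuppCtx X U Γ → MSupp φ X U := by
  induction h with
  | ax φ =>
    intro X U hU
    obtain ⟨P₁, P₂, rfl, h1, h2⟩ := ctx_cons_inv hU φ 0 rfl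
    rw [ctx_nil_inv h2, add_zero]
    exact h1
  | limpI h ih =>
    intro X U hU
    simp only [MSupp]
    intro Y hY V hV
    exact (ih Y (V + U) (MSuppCtx.cons hV (hU.mono hY))).cast (add_comm V U)
  | @limpE Γ Δ φ ψ h1 h2 ih1 ih2 =>
    intro X U hU
    obtain ⟨U₁, U₂, rfl, hΓ, hΔ⟩ := ctx_split Γ hU
    have h1' := ih1 X U₁ hΓ
    simp only [MSupp] at h1'
    exact h1' X subset_rfl U₂ (ih2 X U₂ hΔ)
  | unitI =>
    intro X U hU
    rw [ctx_nil_inv hU]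
    simp only [MSupp]
    intro Y hY V p hV
    exact hV.cast (zero_add V).symm
  | @unitE Γ Δ φ h1 h2 ih1 ih2 =>
    intro X U hU
    obtain ⟨U₁, U₂, rfl, hΓ, hΔ⟩ := ctx_split Γ hU
    have h2' := ih2 X U₂ hΔ
    simp only [MSupp] at h2'
    have := gen_elim (fun _ V => V = 0) φ X U₂ U₁
      (fun X' hX' U p hk =>
        h2' X' hX' U p (((hk X' subset_rfl 0 rfl).cast (add_zero U))))
      (fun Y hY V hV => ((ih1 X U₁ hΓ).mono hY).cast (by rw [hV, add_zero]))
    exact this.cast (add_comm U₂ U₁)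
  | @tensorI Γ Δ φ ψ h1 h2 ih1 ih2 =>
    intro X U hU
    obtain ⟨U₁, U₂, rfl, hΓ, hΔ⟩ := ctx_split Γ hU
    simp only [MSupp]
    intro Y hY W p hk
    exact (hk Y subset_rfl (U₁ + U₂)
      ⟨U₁, U₂, rfl, (ih1 X U₁ hΓ).mono hY, (ih2 X U₂ hΔ).mono hY⟩).cast
      (add_comm W (U₁ + U₂))
  | @tensorE Γ Δ φ ψ χ h1 h2 ih1 ih2 =>
    intro X U hU
    obtain ⟨U₁, U₂, rfl, hΓ, hΔ⟩ := ctx_split Γ hU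
    have h1' := ih1 X U₁ hΓ
    simp only [MSupp] at h1'
    exact gen_elim
      (fun Y V => ∃ V₁ V₂, V = V₁ + V₂ ∧ MSupp φ Y V₁ ∧ MSupp ψ Y V₂)
      χ X U₁ U₂ h1'
      (fun Y hY V hV => by
        obtain ⟨V₁, V₂, rfl, hφ, hψ⟩ := hV
        exact (ih2 Y (V₁ + (V₂ + U₂))
          (MSuppCtx.cons hφ (MSuppCtx.cons hψ (hΔ.mono hY)))).cast (by abel))

/-- (Soundness of the base-extension semantics for IMLL)
If `Γ ⊢ φ` in NIMLL, then `Γ ⊩ φ`. -/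
theorem imll_soundness (Γ : Multiset MForm) (φ : MForm) (h : NIMLL Γ φ) :
    MValid Γ φ := by
  intro B X hX U hU
  exact (nimll_sound h X U hU).cast (zero_add U).symm
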